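/- Let σ ⊂ ℝⁿ be a strictly convex rational polyhedral cone and let Δ = conv({0} ∪ P) for a polytope P ⊂ ℝⁿ₊ with dim Δ = n. If γ is a face of Δ with 0 ∈ γ whose dual cone σ(γ) has dimension k, then the linear span L_γ of γ has dimension n − k, and L_γ = σ(γ)^⊥ := {v : ⟨u,v⟩ = 0 for all u ∈ σ(γ)}. -/

import Mathlib

open scoped BigOperators

/-- The standard pairing `⟨u,v⟩ = Σᵢ uᵢvᵢ` on `ℝⁿ`. -/
def dotR {n : ℕ} (u v : Fin n → ℝ) : ℝ := ∑ i, u i * v i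

/-- The face of `K` consisting of the minimizers of `⟨u,·⟩` on `K`. -/
def minimizerFace {n : ℕ} (K : Set (Fin n → ℝ)) (u : Fin n → ℝ) : Set (Fin n → ℝ) :=
  {v ∈ K | ∀ w ∈ K, dotR u v ≤ dotR u w}

/-- `γ` is a face of `K`: the set of minimizers of some linear functional on `K`. -/
def IsFaceOf {n : ℕ} (γ K : Set (Fin n → ℝ)) : Prop :=
  ∃ u : Fin n → ℝ, γ = minimizerFace K u

/-- The cone `σ(γ)` dual to a face `γ` of `K`: the closure of the set of linear
functionals `u` whose minimizer face on `K` is exactly `γ`. -/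
def dualFaceCone {n : ℕ} (K γ : Set (Fin n → ℝ)) : Set (Fin n → ℝ) :=
  closure {u | minimizerFace K u = γ}

/-- The nonnegative orthant `ℝⁿ₊`. -/
def orthant (n : ℕ) : Set (Fin n → ℝ) := {x | ∀ i, 0 ≤ x i}

/-- The cone generated by a finite set `G`: nonnegative combinations of elements of `G`. -/
def conicHull {n : ℕ} (G : Finset (Fin n → ℝ)) : Set (Fin n → ℝ) :=
  {x | ∃ c : {g // g ∈ G} → ℝ, (∀ g, 0 ≤ c g) ∧ x = ∑ g, c g • (g : Fin n → ℝ)}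

/-- `F` is a face of the cone `σ`: the intersection of `σ` with the kernel of a linear
functional that is nonnegative on `σ`. -/
def IsFaceOfCone {n : ℕ} (F σ : Set (Fin n → ℝ)) : Prop :=
  ∃ u : Fin n → ℝ, (∀ x ∈ σ, 0 ≤ dotR u x) ∧ F = {x ∈ σ | dotR u x = 0}

/-!
Every `u` whose minimizer face is `γ ∋ 0` is nonnegative on `Δ` and vanishes on `γ`, and so
does every limit of such `u`; hence `σ(γ) ⊆ γ^⊥`. Conversely, if `w ⊥ γ` and `u` has minimizer
face `γ`, then so does `u + ε w` for small `ε > 0`, because `Δ` is a polytope: `u` is positive at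
the finitely many vertices outside `γ`, and a small perturbation keeps it so. Thus
`w = ε⁻¹ ((u + ε w) - u) ∈ span σ(γ)`, i.e. `span σ(γ) = γ^⊥`, and both claims follow from
`dim W + dim W^⊥ = n` and `W^⊥⊥ = W` for the dot product.
-/

open Matrix Submodule

section DotOrthogonal

variable {n : ℕ}

lemma dotR_eq_dotProduct (u v : Fin n → ℝ) : dotR u v = u ⬝ᵥ v := rfl

lemma dotR_comm (u v : Fin n → ℝ) : dotR u v = dotR v u := dotProduct_comm u v

/-- `{u | ∀ v ∈ s, dotR u v = 0}`, written as a pullback of a dual annihilator so that the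
duality theory of `Module.Dual` applies. -/
def dotOrthogonal (s : Set (Fin n → ℝ)) : Submodule ℝ (Fin n → ℝ) :=
  (span ℝ s).dualAnnihilator.comap (dotProductEquiv ℝ (Fin n)).toLinearMap

lemma mem_dotOrthogonal {s : Set (Fin n → ℝ)} {u : Fin n → ℝ} :
    u ∈ dotOrthogonal s ↔ ∀ v ∈ s, dotR u v = 0 := by
  rw [dotOrthogonal, mem_comap, mem_dualAnnihilator]
  exact span_le (p := LinearMap.ker (dotProductEquiv ℝ (Fin n) u))

lemma dotOrthogonal_span (s : Set (Fin n → ℝ)) :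
    dotOrthogonal (span ℝ s : Set (Fin n → ℝ)) = dotOrthogonal s := by
  rw [dotOrthogonal, dotOrthogonal, span_eq]

lemma map_dotOrthogonal (s : Set (Fin n → ℝ)) :
    (dotOrthogonal s).map (dotProductEquiv ℝ (Fin n)).toLinearMap = (span ℝ s).dualAnnihilator :=
  map_comap_eq_of_surjective (dotProductEquiv ℝ (Fin n)).surjective _

lemma finrank_span_add_finrank_dotOrthogonal (s : Set (Fin n → ℝ)) :
    Module.finrank ℝ (span ℝ s) + Module.finrank ℝ (dotOrthogonal s) = n := by
  rw [← LinearEquiv.finrank_map_eq (dotProductEquiv ℝ (Fin n)) (dotOrthogonal s), map_dotOrthogonal,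
    Subspace.finrank_add_finrank_dualAnnihilator_eq, Module.finrank_fin_fun]

lemma dotOrthogonal_dotOrthogonal (s : Set (Fin n → ℝ)) :
    dotOrthogonal (dotOrthogonal s : Set (Fin n → ℝ)) = span ℝ s := by
  ext v
  rw [← Subspace.dualAnnihilator_dualCoannihilator_eq (W := span ℝ s), mem_dualCoannihilator,
    ← map_dotOrthogonal, mem_dotOrthogonal]
  constructor
  · rintro h _ ⟨u, hu, rfl⟩
    rw [← h u hu, dotR_comm]; rfl
  · intro h u hu
    rw [dotR_comm]
    exact h _ ⟨u, hu, rfl⟩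

end DotOrthogonal

section Polytope

variable {n : ℕ}

lemma convexHull_insert_convexHull {E : Type*} [AddCommGroup E] [Module ℝ E] (x : E) (s : Set E) :
    convexHull ℝ (insert x (convexHull ℝ s)) = convexHull ℝ (insert x s) := by
  simp only [Set.insert_eq, convexHull_convexHull_union_right]

lemma dotR_nonneg_of_mem_convexHull {s : Set (Fin n → ℝ)} {u x : Fin n → ℝ}
    (hs : ∀ p ∈ s, 0 ≤ dotR u p) (hx : x ∈ convexHull ℝ s) : 0 ≤ dotR u x :=
  convexHull_min hs (convex_halfSpace_ge (dotProductEquiv ℝ (Fin n) u).isLinear 0) hx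

lemma sep_convexHull_dotR_eq_zero {P : Finset (Fin n → ℝ)} {u : Fin n → ℝ}
    (hP : ∀ p ∈ P, 0 ≤ dotR u p) :
    {x ∈ convexHull ℝ (P : Set (Fin n → ℝ)) | dotR u x = 0} =
      convexHull ℝ ↑(P.filter (dotR u · = 0)) := by
  ext x
  constructor
  · rintro ⟨hx, hx0⟩
    obtain ⟨f, hf0, hf1, rfl⟩ := Finset.mem_convexHull'.1 hx
    have hsum : ∑ p ∈ P, f p * dotR u p = 0 := by
      simpa [dotR_eq_dotProduct, dotProduct_sum, dotProduct_smul] using hx0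
    have hterm := (Finset.sum_eq_zero_iff_of_nonneg fun p hp ↦
      mul_nonneg (hf0 p hp) (hP p hp)).1 hsum
    have hsupp : ∀ p ∈ P, f p ≠ 0 → dotR u p = 0 := fun p hp hfp ↦
      (mul_eq_zero.1 (hterm p hp)).resolve_left hfp
    refine Finset.mem_convexHull'.2 ⟨f, fun p hp ↦ hf0 p (Finset.mem_filter.1 hp).1, ?_, ?_⟩
    · rwa [Finset.sum_filter_of_ne hsupp]
    · exact Finset.sum_filter_of_ne fun p hp hfp ↦ hsupp p hp fun h ↦ hfp (by rw [h, zero_smul])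
  · intro hx
    refine ⟨convexHull_mono (Finset.coe_subset.2 (Finset.filter_subset _ _)) hx, ?_⟩
    exact convexHull_min (fun p hp ↦ (Finset.mem_filter.1 hp).2)
      (convex_hyperplane (dotProductEquiv ℝ (Fin n) u).isLinear 0) hx

lemma exists_pos_forall_pos_add_mul {ι : Type*} (s : Finset ι) (f g : ι → ℝ) :
    ∃ ε > 0, ∀ i ∈ s, 0 < f i → 0 < f i + ε * g i := by
  have hsmall : ∀ᶠ ε in nhdsWithin (0 : ℝ) (Set.Ioi 0), ∀ i ∈ s, 0 < f i → 0 < f i + ε * g i := by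
    refine (Filter.eventually_all_finset s).2 fun i _ ↦ ?_
    by_cases hfi : 0 < f i
    · have hlim : Filter.Tendsto (fun ε : ℝ ↦ f i + ε * g i) (nhds 0) (nhds (f i)) := by
        simpa using ((by fun_prop) : Continuous fun ε : ℝ ↦ f i + ε * g i).tendsto 0
      filter_upwards [(hlim.mono_left nhdsWithin_le_nhds).eventually_const_lt hfi] with ε hε
      exact fun _ ↦ hε
    · exact Filter.Eventually.of_forall fun _ h ↦ absurd h hfi
  exact (hsmall.and self_mem_nhdsWithin).exists.imp fun ε h ↦ ⟨h.2, h.1⟩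

end Polytope

section MinimizerFace

variable {n : ℕ}

lemma minimizerFace_eq_of_zero_mem {K : Set (Fin n → ℝ)} {u : Fin n → ℝ}
    (h0 : 0 ∈ minimizerFace K u) : minimizerFace K u = {x ∈ K | dotR u x = 0} := by
  have hmin : ∀ x ∈ K, 0 ≤ dotR u x := by simpa [dotR_eq_dotProduct] using h0.2
  ext x
  refine ⟨fun hx ↦ ⟨hx.1, le_antisymm ?_ (hmin x hx.1)⟩, fun hx ↦ ⟨hx.1, fun w hw ↦ ?_⟩⟩
  · simpa [dotR_eq_dotProduct] using hx.2 0 h0.1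
  · rw [hx.2]
    exact hmin w hw

lemma zero_mem_minimizerFace_iff {K : Set (Fin n → ℝ)} {u : Fin n → ℝ} (hK : 0 ∈ K) :
    0 ∈ minimizerFace K u ↔ ∀ x ∈ K, 0 ≤ dotR u x := by
  simp [minimizerFace, hK, dotR_eq_dotProduct]

theorem exists_minimizerFace_add_smul_eq {P : Finset (Fin n → ℝ)} {u w : Fin n → ℝ}
    (h0 : 0 ∈ minimizerFace (convexHull ℝ ↑P) u)
    (hw : ∀ v ∈ minimizerFace (convexHull ℝ ↑P) u, dotR w v = 0) :
    ∃ ε : ℝ, ε ≠ 0 ∧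
      minimizerFace (convexHull ℝ ↑P) (u + ε • w) = minimizerFace (convexHull ℝ ↑P) u := by
  have hface := minimizerFace_eq_of_zero_mem h0
  have hPK : ∀ p ∈ P, p ∈ convexHull ℝ (P : Set (Fin n → ℝ)) :=
    fun p hp ↦ subset_convexHull ℝ _ (Finset.mem_coe.2 hp)
  have hu : ∀ p ∈ P, 0 ≤ dotR u p := fun p hp ↦ (zero_mem_minimizerFace_iff h0.1).1 h0 p (hPK p hp)
  obtain ⟨ε, hε, hpos⟩ := exists_pos_forall_pos_add_mul P (dotR u ·) (dotR w ·)
  have hsign : ∀ p ∈ P, 0 ≤ dotR (u + ε • w) p ∧ (dotR (u + ε • w) p = 0 ↔ dotR u p = 0) := by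
    intro p hp
    have hdot : dotR (u + ε • w) p = dotR u p + ε * dotR w p := by
      simp only [dotR_eq_dotProduct, add_dotProduct, smul_dotProduct, smul_eq_mul]
    rw [hdot]
    rcases (hu p hp).eq_or_lt with hup | hup
    · have hwp : dotR w p = 0 := hw p (hface ▸ ⟨hPK p hp, hup.symm⟩)
      simp [← hup, hwp]
    · have hpos_p := hpos p hp hup
      exact ⟨hpos_p.le, iff_of_false hpos_p.ne' hup.ne'⟩
  refine ⟨ε, hε.ne', ?_⟩
  have h0' : 0 ∈ minimizerFace (convexHull ℝ ↑P) (u + ε • w) :=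
    (zero_mem_minimizerFace_iff h0.1).2 fun _ ↦
      dotR_nonneg_of_mem_convexHull fun p hp ↦ (hsign p hp).1
  rw [minimizerFace_eq_of_zero_mem h0', hface,
    sep_convexHull_dotR_eq_zero fun p hp ↦ (hsign p hp).1, sep_convexHull_dotR_eq_zero hu, Finset.filter_congr fun p hp ↦ (hsign p hp).2]

end MinimizerFace

section DualFaceCone

variable {n : ℕ}

lemma dotR_eq_zero_of_mem_dualFaceCone {K γ : Set (Fin n → ℝ)} (h0 : 0 ∈ γ) {u v : Fin n → ℝ}
    (hu : u ∈ dualFaceCone K γ) (hv : v ∈ γ) : dotR u v = 0 := by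
  refine closure_minimal (fun u' (hu' : minimizerFace K u' = γ) ↦ ?_)
    (isClosed_eq (continuous_id.dotProduct continuous_const) continuous_const) hu
  rw [← hu'] at h0 hv
  exact (minimizerFace_eq_of_zero_mem h0 ▸ hv).2

theorem span_dualFaceCone_eq_dotOrthogonal {P : Finset (Fin n → ℝ)} {γ : Set (Fin n → ℝ)}
    (hγ : IsFaceOf γ (convexHull ℝ ↑P)) (h0 : 0 ∈ γ) :
    span ℝ (dualFaceCone (convexHull ℝ ↑P) γ) = dotOrthogonal γ := by
  obtain ⟨u, rfl⟩ := hγ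
  refine le_antisymm (span_le.2 fun u' hu' ↦ mem_dotOrthogonal.2 fun v hv ↦
    dotR_eq_zero_of_mem_dualFaceCone h0 hu' hv) fun w hw ↦ ?_
  have hmem : ∀ u', minimizerFace (convexHull ℝ ↑P) u' = minimizerFace (convexHull ℝ ↑P) u →
      u' ∈ span ℝ (dualFaceCone (convexHull ℝ ↑P) (minimizerFace (convexHull ℝ ↑P) u)) :=
    fun u' hu' ↦ subset_span (subset_closure hu')
  obtain ⟨ε, hε, hface⟩ := exists_minimizerFace_add_smul_eq h0 (mem_dotOrthogonal.1 hw)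
  have hw_eq : w = ε⁻¹ • ((u + ε • w) - u) := by
    rw [add_sub_cancel_left, smul_smul, inv_mul_cancel₀ hε, one_smul]
  rw [hw_eq]
  exact smul_mem _ _ (sub_mem (hmem _ hface) (hmem u rfl))

end DualFaceCone

theorem span_of_face_is_orthogonal_complement_general {n : ℕ}
    (V : Finset (Fin n → ℝ))
    (Δ : Set (Fin n → ℝ))
    (hΔ : Δ = convexHull ℝ (insert 0 (convexHull ℝ (V : Set (Fin n → ℝ)))))
    (γ : Set (Fin n → ℝ)) (hγ : IsFaceOf γ Δ) (h0γ : (0 : Fin n → ℝ) ∈ γ)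
    (k : ℕ) (hk : Module.finrank ℝ (Submodule.span ℝ (dualFaceCone Δ γ)) = k) :
    Module.finrank ℝ (Submodule.span ℝ γ) = n - k ∧
      (Submodule.span ℝ γ : Set (Fin n → ℝ)) =
        {v | ∀ u ∈ dualFaceCone Δ γ, dotR u v = 0} := by
  rw [convexHull_insert_convexHull, ← Finset.coe_insert] at hΔ
  subst hΔ
  have hσ := span_dualFaceCone_eq_dotOrthogonal hγ h0γ
  constructor
  · have := finrank_span_add_finrank_dotOrthogonal γ
    rw [← hσ, hk] at this
    omega
  · rw [← dotOrthogonal_dotOrthogonal, ← hσ, dotOrthogonal_span]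
    ext v
    simp only [SetLike.mem_coe, mem_dotOrthogonal, Set.mem_ofPred_eq, dotR_comm v]

/-- let `Δ = conv({0} ∪ P)` for a polytope `P ⊂ ℝⁿ₊`, with `dim Δ = n`. If
`γ` is a face of `Δ` with `0 ∈ γ` whose dual cone `σ(γ)` has dimension `k`, then the
linear span `L_γ` of `γ` has dimension `n − k` and `L_γ = σ(γ)^⊥`. -/
theorem span_of_face_is_orthogonal_complement {n : ℕ}
    (V : Finset (Fin n → ℝ)) (hV : ∀ v ∈ V, ∀ i, 0 ≤ v i)
    (Δ : Set (Fin n → ℝ))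
    (hΔ : Δ = convexHull ℝ (insert 0 (convexHull ℝ (V : Set (Fin n → ℝ)))))
    (hdim : Module.finrank ℝ (vectorSpan ℝ Δ) = n)
    (γ : Set (Fin n → ℝ)) (hγ : IsFaceOf γ Δ) (h0γ : (0 : Fin n → ℝ) ∈ γ)
    (k : ℕ) (hk : Module.finrank ℝ (Submodule.span ℝ (dualFaceCone Δ γ)) = k) :
    Module.finrank ℝ (Submodule.span ℝ γ) = n - k ∧
      (Submodule.span ℝ γ : Set (Fin n → ℝ)) =
        {v | ∀ u ∈ dualFaceCone Δ γ, dotR u v = 0} :=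
  span_of_face_is_orthogonal_complement_general V Δ hΔ γ hγ h0γ k hk
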